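/- Let d, n ≥ 1 and D = d^n, and let p be a nonincreasing probability vector on Fin D. Define ψ, Φ ∈ ℂ^{Fin D × Fin D} by ψ(i,j) = δ_{ij}√(p i) and Φ(i,j) = δ_{ij}·D^{−1/2}. Then the supremum over pairs of unitary D×D complex matrices U, V of |⟨ψ, (U ⊗ V)·Φ⟩|² equals D^{−1}·(Σ_{i=1}^{D} √(p i))². (The optimal fidelity of diluting n copies of the d-dimensional maximally entangled state into a target pure state using local unitaries and zero communication is d^{−n} times the (d^n, 1/2)-quasinorm of the target Schmidt distribution.) -/

import Mathlib

open Matrix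
open scoped Kronecker

/-!
Write `ψ = vec (diagonal √p)` and `Φ = D^{-1/2} vec 1`. Since `(U ⊗ V) vec X = vec (V X Uᵀ)`, the
overlap `⟨ψ, (U ⊗ V) Φ⟩` equals `D^{-1/2} ∑ i, √(p i) (V Uᵀ) i i`. The matrix `V Uᵀ` is unitary, so
its entries have modulus at most `1`, which bounds the overlap by `D^{-1/2} ∑ i, √(p i)`; the bound
is attained at `U = V = 1`.
-/

section

variable {ι : Type*} [Fintype ι] [DecidableEq ι]

theorem sum_star_diag_mul_kronecker_mulVec_diag (a : ι → ℝ) (c : ℂ) (U V : Matrix ι ι ℂ) :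
    ∑ y : ι × ι, starRingEnd ℂ (if y.1 = y.2 then (a y.1 : ℂ) else 0) *
        ((U ⊗ₖ V) *ᵥ fun z : ι × ι => if z.1 = z.2 then c else 0) y =
      c * ∑ i, a i * (V * Uᵀ) i i := by
  -- `vec Xᵀ (i, j) = X i j`, so both vectors are, definitionally, vectorised diagonal matrices.
  change star (vec (diagonal fun i => (a i : ℂ))ᵀ) ⬝ᵥ
    ((U ⊗ₖ V) *ᵥ vec (diagonal fun _ => c)ᵀ) = _
  rw [diagonal_transpose, diagonal_transpose, kronecker_mulVec_vec, star_vec_dotProduct_vec,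
    diagonal_conjTranspose, ← smul_one_eq_diagonal, Matrix.mul_smul, Matrix.mul_one,
    Matrix.smul_mul, Matrix.mul_smul, trace_smul, smul_eq_mul]
  simp only [trace, diag_apply, diagonal_mul, Pi.star_apply, Complex.star_def, Complex.conj_ofReal]

theorem norm_sum_mul_diag_le {W : Matrix ι ι ℂ} (hW : W ∈ unitaryGroup ι ℂ) (a : ι → ℝ)
    (ha : ∀ i, 0 ≤ a i) : ‖∑ i, (a i : ℂ) * W i i‖ ≤ ∑ i, a i := by
  refine (norm_sum_le _ _).trans (Finset.sum_le_sum fun i _ => ?_)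
  rw [norm_mul, Complex.norm_of_nonneg (ha i)]
  exact mul_le_of_le_one_right (ha i) (entry_norm_bound_of_unitary hW i i)

theorem sSup_norm_sq_overlap_kronecker_diag (a : ι → ℝ) (ha : ∀ i, 0 ≤ a i) (c : ℝ) :
    sSup {x : ℝ | ∃ U ∈ unitaryGroup ι ℂ, ∃ V ∈ unitaryGroup ι ℂ,
      x = ‖∑ y : ι × ι, starRingEnd ℂ (if y.1 = y.2 then (a y.1 : ℂ) else 0) *
        ((U ⊗ₖ V) *ᵥ fun z : ι × ι => if z.1 = z.2 then (c : ℂ) else 0) y‖ ^ 2} =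
      (c * ∑ i, a i) ^ 2 := by
  have overlap (U V : Matrix ι ι ℂ) :
      ‖∑ y : ι × ι, starRingEnd ℂ (if y.1 = y.2 then (a y.1 : ℂ) else 0) *
        ((U ⊗ₖ V) *ᵥ fun z : ι × ι => if z.1 = z.2 then (c : ℂ) else 0) y‖ =
      |c| * ‖∑ i, (a i : ℂ) * (V * Uᵀ) i i‖ := by
    rw [sum_star_diag_mul_kronecker_mulVec_diag, norm_mul, Complex.norm_real, Real.norm_eq_abs]
  refine IsGreatest.csSup_eq ⟨⟨1, one_mem _, 1, one_mem _, ?_⟩, ?_⟩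
  · rw [overlap, transpose_one, Matrix.mul_one]
    simp only [one_apply_eq, mul_one, ← Complex.ofReal_sum]
    rw [Complex.norm_of_nonneg (Finset.sum_nonneg fun i _ => ha i), mul_pow, mul_pow, sq_abs]
  · rintro _ ⟨U, hU, V, hV, rfl⟩
    rw [overlap, mul_pow, mul_pow, sq_abs]
    have hW : V * Uᵀ ∈ unitaryGroup ι ℂ := mul_mem hV (transpose_mem_unitaryGroup_iff.mpr hU)
    gcongr
    exact norm_sum_mul_diag_le hW a ha

end

theorem stmt_11_general (d n : ℕ)
    (p : Fin (d ^ n) → ℝ) :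
    sSup {x : ℝ |
      ∃ U ∈ Matrix.unitaryGroup (Fin (d ^ n)) ℂ,
        ∃ V ∈ Matrix.unitaryGroup (Fin (d ^ n)) ℂ,
          x = ‖∑ y : Fin (d ^ n) × Fin (d ^ n),
            (starRingEnd ℂ) (if y.1 = y.2 then (Real.sqrt (p y.1) : ℂ) else 0) *
              ((U ⊗ₖ V) *ᵥ
                (fun z : Fin (d ^ n) × Fin (d ^ n) =>
                  if z.1 = z.2 then (((Real.sqrt ((d : ℝ) ^ n))⁻¹ : ℝ) : ℂ) else 0)) y‖ ^ 2}
    = ((d : ℝ) ^ n)⁻¹ * (∑ i, Real.sqrt (p i)) ^ 2 := by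
  refine (sSup_norm_sq_overlap_kronecker_diag (fun i => √(p i)) (fun _ => Real.sqrt_nonneg _)
    _).trans ?_
  rw [mul_pow, inv_pow, Real.sq_sqrt (by positivity)]

/-- dilution under local unitaries.  The supremum over local
unitaries `U, V` of the fidelity between the target state with nonincreasing
Schmidt distribution `p` and `(U ⊗ V)` applied to `n` copies of the
`d`-dimensional maximally entangled state (total dimension `D = d^n`) equals
`D⁻¹ (∑ i, √(p i))²`. -/
theorem stmt_11 (d n : ℕ) (hd : 1 ≤ d) (hn : 1 ≤ n)
    (p : Fin (d ^ n) → ℝ) (hp0 : ∀ i, 0 ≤ p i) (hp1 : ∑ i, p i = 1)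
    (hpa : Antitone p) :
    sSup {x : ℝ |
      ∃ U ∈ Matrix.unitaryGroup (Fin (d ^ n)) ℂ,
        ∃ V ∈ Matrix.unitaryGroup (Fin (d ^ n)) ℂ,
          x = ‖∑ y : Fin (d ^ n) × Fin (d ^ n),
            (starRingEnd ℂ) (if y.1 = y.2 then (Real.sqrt (p y.1) : ℂ) else 0) *
              ((U ⊗ₖ V) *ᵥ
                (fun z : Fin (d ^ n) × Fin (d ^ n) =>
                  if z.1 = z.2 then (((Real.sqrt ((d : ℝ) ^ n))⁻¹ : ℝ) : ℂ) else 0)) y‖ ^ 2}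
    = ((d : ℝ) ^ n)⁻¹ * (∑ i, Real.sqrt (p i)) ^ 2 :=
  stmt_11_general d n p
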